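/- arXiv:1212.5351 — 8 statements merged into one kernel-verified Lean document; each statement's English description precedes it below -/
import Mathlib

section
/- There exist three distinct points A, B, C on the unit circle S^1 ⊆ R^2 such that the set {A, B, C} is not a spherical suborbit of any finite group action: for every n ≥ 2, every linear isometric embedding ι : R^2 → R^n, every finite subgroup G of the orthogonal group O(n), and every v ∈ S^{n-1}, the three points ι(A), ι(B), ι(C) are not all contained in the orbit G·v. -/
/-!
Take `A = (3/5, 4/5)`, `B = (3/5, -4/5)` and `C = (1, 0)`, so that `A + B = (6/5) C`. If
`g₁ v = A`, `g₂ v = B` and `g₃ v = C` for elements `gᵢ` of a finite group of linear maps, then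
`v` is an eigenvector with eigenvalue `6/5` of `g₃⁻¹ g₁ + g₃⁻¹ g₂`. This endomorphism lies in the
`ℤ`-span of the finite multiplicatively closed set `G`, which is a ring and a finitely generated
`ℤ`-module, so it is integral over `ℤ`, and hence so are its eigenvalues. But `6/5` is not an
algebraic integer.
-/

open Polynomial

theorem Algebra.isIntegral_of_mem_adjoin_of_finite {R A : Type*} [CommRing R] [Ring A]
    [Algebra R A] (S : Submonoid A) (hS : (S : Set A).Finite) {x : A}
    (hx : x ∈ Algebra.adjoin R (S : Set A)) : IsIntegral R x := by
  refine IsIntegral.of_mem_of_fg _ ?_ x hx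
  rw [Algebra.adjoin_eq_span, Submonoid.closure_eq]
  exact Submodule.fg_span hS

theorem Module.End.isIntegral_of_hasEigenvector {R K V : Type*} [CommRing R] [Field K]
    [Algebra R K] [AddCommGroup V] [Module K V] [Module R V] [IsScalarTower R K V]
    {f : Module.End K V} (hf : IsIntegral R f) {μ : K} {v : V} (h : f.HasEigenvector μ v) :
    IsIntegral R μ := by
  obtain ⟨p, hmonic, hp⟩ := hf
  refine ⟨p, hmonic, ?_⟩
  have := aeval_apply_of_hasEigenvector (p := p.map (algebraMap R K)) h
  rw [aeval_map_algebraMap, aeval_def, hp, eval_map, LinearMap.zero_apply, eq_comm] at this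
  exact (smul_eq_zero.mp this).resolve_right h.2

theorem Rat.not_isIntegral_cast {K : Type*} [Field K] [CharZero K] {q : ℚ} (hq : q.den ≠ 1) :
    ¬ IsIntegral ℤ (q : K) := by
  intro h
  have hq' : IsIntegral ℤ q :=
    (isIntegral_algebraMap_iff (algebraMap ℚ K).injective).mp (by simpa using h)
  obtain ⟨m, rfl⟩ := IsIntegrallyClosed.isIntegral_iff.mp hq'
  exact hq (by simp)

theorem Representation.isIntegral_of_sum_apply_eq_smul_apply {G K V ι : Type*} [Group G]
    [Finite G] [Field K] [AddCommGroup V] [Module K V] (ρ : Representation K G V)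
    (s : Finset ι) (g : ι → G) (c : G) {v : V} (hv : v ≠ 0) {μ : K}
    (h : ∑ i ∈ s, ρ (g i) v = μ • ρ c v) : IsIntegral ℤ μ := by
  set f := ∑ i ∈ s, ρ (c⁻¹ * g i)
  have hf : IsIntegral ℤ f := by
    refine Algebra.isIntegral_of_mem_adjoin_of_finite (MonoidHom.mrange ρ)
      (Set.finite_range ρ) (Subalgebra.sum_mem _ fun i _ => ?_)
    exact Algebra.subset_adjoin ⟨c⁻¹ * g i, rfl⟩
  have hfv : f v = μ • v :=
    calc f v = ρ c⁻¹ (∑ i ∈ s, ρ (g i) v) := by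
          simp only [f, LinearMap.sum_apply, map_mul, Module.End.mul_apply, map_sum]
      _ = μ • v := by
          rw [h, map_smul, ← Module.End.mul_apply, ← map_mul, inv_mul_cancel, map_one,
            Module.End.one_apply]
  exact Module.End.isIntegral_of_hasEigenvector hf ⟨Module.End.mem_eigenspace_iff.mpr hfv, hv⟩

@[simps]
def LinearIsometryEquiv.toLinearMapMonoidHom {R E : Type*} [Semiring R]
    [SeminormedAddCommGroup E] [Module R E] : (E ≃ₗᵢ[R] E) →* Module.End R E where
  toFun e := e.toLinearEquiv.toLinearMap
  map_one' := rfl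
  map_mul' _ _ := rfl

/-- **Theorem 2 (a three-point set on `S^1` that is not a spherical suborbit of any
finite group action).** There are three distinct points `A, B, C` on the unit circle
such that for every `n ≥ 2`, every linear isometric embedding `ι : ℝ² → ℝⁿ`, every
finite subgroup `G` of the orthogonal group of `ℝⁿ`, and every unit vector `v`, the
points `ι A, ι B, ι C` are not all contained in the orbit `G·v`. -/
theorem exists_triple_not_spherical_suborbit :
    ∃ A B C : EuclideanSpace ℝ (Fin 2),
      ‖A‖ = 1 ∧ ‖B‖ = 1 ∧ ‖C‖ = 1 ∧ A ≠ B ∧ A ≠ C ∧ B ≠ C ∧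
      ∀ n : ℕ, 2 ≤ n →
        ∀ ι : EuclideanSpace ℝ (Fin 2) →ₗᵢ[ℝ] EuclideanSpace ℝ (Fin n),
        ∀ G : Subgroup (EuclideanSpace ℝ (Fin n) ≃ₗᵢ[ℝ] EuclideanSpace ℝ (Fin n)),
          Finite G →
        ∀ v : EuclideanSpace ℝ (Fin n), ‖v‖ = 1 →
          ¬ (∀ x ∈ ({A, B, C} : Set (EuclideanSpace ℝ (Fin 2))),
              ∃ g ∈ G,
                (g : EuclideanSpace ℝ (Fin n) ≃ₗᵢ[ℝ] EuclideanSpace ℝ (Fin n)) v = ι x) := by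
  refine ⟨!₂[3/5, 4/5], !₂[3/5, -4/5], !₂[1, 0], ?_, ?_, ?_, ?_, ?_, ?_, ?_⟩
  iterate 3 (rw [EuclideanSpace.norm_eq, Real.sqrt_eq_one]; norm_num [Fin.sum_univ_two])
  iterate 3 (intro h; have h₁ := congr($h 1); norm_num at h₁)
  intro n _ ι G _ v hv hmem
  obtain ⟨a, ha, hav⟩ := hmem !₂[3/5, 4/5] (by simp)
  obtain ⟨b, hb, hbv⟩ := hmem !₂[3/5, -4/5] (by simp)
  obtain ⟨c, hc, hcv⟩ := hmem !₂[1, 0] (by simp)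
  have hrel : a v + b v = ((6 / 5 : ℚ) : ℝ) • c v := by
    rw [hav, hbv, hcv, ← map_add, ← map_smul]
    congr 1
    ext i
    fin_cases i <;> norm_num
  refine Rat.not_isIntegral_cast (K := ℝ) (q := 6 / 5) (by norm_num) ?_
  refine Representation.isIntegral_of_sum_apply_eq_smul_apply
    (LinearIsometryEquiv.toLinearMapMonoidHom.comp G.subtype) Finset.univ ![⟨a, ha⟩, ⟨b, hb⟩]
    ⟨c, hc⟩ (norm_ne_zero_iff.mp (hv ▸ one_ne_zero)) ?_
  simpa [Fin.sum_univ_two] using hrel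
end

section
/- Let p be a prime. If X ⊆ R^k and Y ⊆ R^m are finite Euclidean sub-p-toral sets, then the Cartesian product X × Y ⊆ R^k × R^m = R^{k+m} is Euclidean sub-p-toral. -/
/-! If `X` lies in an orbit of `G ≅ (ℤ/p)^α` acting isometrically on `ℝ^n` and `Y` in an orbit of
`H ≅ (ℤ/p)^β` on `ℝ^n'`, then `G × H ≅ (ℤ/p)^(α+β)` acts coordinatewise by isometries on the
`L²` product `ℝ^n × ℝ^n' ≅ ℝ^(n+n')`, and the orbit of `(v, w)` contains every `(ι x, ι' y)`.
The product embedding `(x, y) ↦ (ι x, ι' y)` is again isometric because both sides carry the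
`ℓ²` combination of the two distances. -/

/-- A finite set `X ⊆ ℝ^k` is *Euclidean sub-p-toral* if some isometric copy of `X`
in a possibly larger `ℝ^n` is contained in an orbit of a finite group of isometries
of `ℝ^n` isomorphic to `(ℤ/p)^α`. -/
def EuclideanSubPToral (p : ℕ) {k : ℕ} (X : Set (EuclideanSpace ℝ (Fin k))) : Prop :=
  ∃ n : ℕ, k ≤ n ∧
    ∃ ι : X → EuclideanSpace ℝ (Fin n),
      (∀ x y : X, dist (ι x) (ι y) = dist (x : EuclideanSpace ℝ (Fin k)) y) ∧
      ∃ (G : Subgroup (EuclideanSpace ℝ (Fin n) ≃ᵢ EuclideanSpace ℝ (Fin n))) (α : ℕ),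
        Nonempty (G ≃* Multiplicative (Fin α → ZMod p)) ∧
        ∃ v : EuclideanSpace ℝ (Fin n), ∀ x : X, ∃ g ∈ G,
          (g : EuclideanSpace ℝ (Fin n) ≃ᵢ EuclideanSpace ℝ (Fin n)) v = ι x

/-- The identification `ℝ^k × ℝ^m = ℝ^{k+m}`. -/
noncomputable def prodPoint {k m : ℕ} (x : EuclideanSpace ℝ (Fin k))
    (y : EuclideanSpace ℝ (Fin m)) : EuclideanSpace ℝ (Fin (k + m)) :=
  (WithLp.equiv 2 (Fin (k + m) → ℝ)).symm
    (fun i => Sum.elim ((WithLp.equiv 2 (Fin k → ℝ)) x) ((WithLp.equiv 2 (Fin m → ℝ)) y)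
      (finSumFinEquiv.symm i))

open scoped ENNReal

namespace IsometryEquiv

section WithLpProd

variable (q : ℝ≥0∞) [Fact (1 ≤ q)] {A B : Type*} [PseudoEMetricSpace A] [PseudoEMetricSpace B]

variable (A B) in
def withLpProdCongrHom : (A ≃ᵢ A) × (B ≃ᵢ B) →* (WithLp q (A × B) ≃ᵢ WithLp q (A × B)) where
  toFun fg := withLpProdCongr q fg.1 fg.2
  map_one' := rfl
  map_mul' _ _ := rfl

theorem withLpProdCongrHom_injective [Nonempty A] [Nonempty B] :
    Function.Injective (withLpProdCongrHom q A B) := by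
  rintro ⟨f, g⟩ ⟨f', g'⟩ h
  obtain ⟨a⟩ := ‹Nonempty A›
  obtain ⟨b⟩ := ‹Nonempty B›
  refine Prod.ext (IsometryEquiv.ext fun a' => ?_) (IsometryEquiv.ext fun b' => ?_)
  · exact congrArg (fun e => (e (WithLp.toLp q (a', b))).fst) h
  · exact congrArg (fun e => (e (WithLp.toLp q (a, b'))).snd) h

end WithLpProd

variable {A B : Type*} [PseudoEMetricSpace A] [PseudoEMetricSpace B]

def isometryEquivCongr (e : A ≃ᵢ B) : (A ≃ᵢ A) ≃* (B ≃ᵢ B) where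
  toFun g := (e.symm.trans g).trans e
  invFun h := (e.trans h).trans e.symm
  left_inv g := by ext; simp
  right_inv h := by ext; simp
  map_mul' g h := by ext; simp [mul_apply]

theorem isometryEquivCongr_apply_apply (e : A ≃ᵢ B) (g : A ≃ᵢ A) (a : A) :
    e.isometryEquivCongr g (e a) = e (g a) := by
  simp [isometryEquivCongr]

end IsometryEquiv

def finAddArrowMulEquiv (M : Type*) [AddCommMonoid M] (α β : ℕ) :
    Multiplicative (Fin α → M) × Multiplicative (Fin β → M) ≃* Multiplicative (Fin (α + β) → M) :=
  (MulEquiv.prodMultiplicative _ _).symm.trans <| AddEquiv.toMultiplicative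
    ((LinearEquiv.funCongrLeft ℕ M finSumFinEquiv).trans
      (LinearEquiv.sumArrowLequivProdArrow _ _ ℕ M)).toAddEquiv.symm

def IsSubPToral (p : ℕ) {A : Type*} [PseudoEMetricSpace A] (S : Set A) : Prop :=
  ∃ (G : Subgroup (A ≃ᵢ A)) (α : ℕ), Nonempty (G ≃* Multiplicative (Fin α → ZMod p)) ∧
    ∃ v : A, ∀ s ∈ S, ∃ g ∈ G, g v = s

namespace IsSubPToral

variable {p : ℕ} {A B : Type*} [PseudoEMetricSpace A] [PseudoEMetricSpace B]

theorem mono {S T : Set A} (hT : IsSubPToral p T) (hST : S ⊆ T) : IsSubPToral p S := by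
  obtain ⟨G, α, hG, v, hv⟩ := hT
  exact ⟨G, α, hG, v, fun s hs => hv s (hST hs)⟩

theorem image {S : Set A} (hS : IsSubPToral p S) (e : A ≃ᵢ B) : IsSubPToral p (e '' S) := by
  obtain ⟨G, α, ⟨eG⟩, v, hv⟩ := hS
  refine ⟨G.map e.isometryEquivCongr.toMonoidHom, α,
    ⟨(e.isometryEquivCongr.subgroupMap G).symm.trans eG⟩, e v, ?_⟩
  rintro _ ⟨s, hs, rfl⟩
  obtain ⟨g, hg, rfl⟩ := hv s hs
  exact ⟨_, Subgroup.mem_map_of_mem _ hg, e.isometryEquivCongr_apply_apply g v⟩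

theorem withLpProd (q : ℝ≥0∞) [Fact (1 ≤ q)] {S : Set A} {T : Set B}
    (hS : IsSubPToral p S) (hT : IsSubPToral p T) :
    IsSubPToral p (WithLp.toLp q '' S ×ˢ T) := by
  obtain ⟨G, α, ⟨eG⟩, v, hv⟩ := hS
  obtain ⟨H, β, ⟨eH⟩, w, hw⟩ := hT
  have : Nonempty A := ⟨v⟩
  have : Nonempty B := ⟨w⟩
  let φ := IsometryEquiv.withLpProdCongrHom q A B
  refine ⟨(G.prod H).map φ, α + β, ⟨?_⟩, WithLp.toLp q (v, w), ?_⟩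
  · exact (Subgroup.equivMapOfInjective _ φ (IsometryEquiv.withLpProdCongrHom_injective q)).symm
      |>.trans <| (G.prodEquiv H).trans <| (eG.prodCongr eH).trans <| finAddArrowMulEquiv _ α β
  · rintro _ ⟨⟨s, t⟩, ⟨hs, ht⟩, rfl⟩
    obtain ⟨g, hg, rfl⟩ := hv s hs
    obtain ⟨h, hh, rfl⟩ := hw t ht
    exact ⟨φ (g, h), Subgroup.mem_map_of_mem _ (Subgroup.mem_prod.2 ⟨hg, hh⟩), rfl⟩

end IsSubPToral

theorem euclideanSubPToral_iff (p : ℕ) {k : ℕ} (X : Set (EuclideanSpace ℝ (Fin k))) :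
    EuclideanSubPToral p X ↔ ∃ n : ℕ, k ≤ n ∧ ∃ ι : X → EuclideanSpace ℝ (Fin n),
      (∀ x y : X, dist (ι x) (ι y) = dist (x : EuclideanSpace ℝ (Fin k)) y) ∧
        IsSubPToral p (Set.range ι) := by
  simp only [EuclideanSubPToral, IsSubPToral, Set.forall_mem_range]

noncomputable def EuclideanSpace.finAddIsometryEquivProd (k m : ℕ) :
    EuclideanSpace ℝ (Fin (k + m)) ≃ᵢ
      WithLp 2 (EuclideanSpace ℝ (Fin k) × EuclideanSpace ℝ (Fin m)) :=
  ((LinearIsometryEquiv.piLpCongrLeft 2 ℝ ℝ finSumFinEquiv.symm).trans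
    (PiLp.sumPiLpEquivProdLpPiLp 2 _)).toIsometryEquiv

theorem prodPoint_eq_symm_toLp {k m : ℕ} (x : EuclideanSpace ℝ (Fin k))
    (y : EuclideanSpace ℝ (Fin m)) :
    prodPoint x y = (EuclideanSpace.finAddIsometryEquivProd k m).symm (WithLp.toLp 2 (x, y)) := by
  ext i
  rcases h : finSumFinEquiv.symm i with a | b <;>
    simp [prodPoint, EuclideanSpace.finAddIsometryEquivProd, h]

theorem dist_prodPoint {k m : ℕ} (x x' : EuclideanSpace ℝ (Fin k))
    (y y' : EuclideanSpace ℝ (Fin m)) :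
    dist (prodPoint x y) (prodPoint x' y') = √(dist x x' ^ 2 + dist y y' ^ 2) := by
  simp [prodPoint_eq_symm_toLp, IsometryEquiv.dist_eq, WithLp.prod_dist_eq_of_L2]

theorem euclideanSubPToral_prod_general (p : ℕ) {k m : ℕ}
    (X : Set (EuclideanSpace ℝ (Fin k))) (Y : Set (EuclideanSpace ℝ (Fin m)))
    (hX : EuclideanSubPToral p X) (hY : EuclideanSubPToral p Y) :
    EuclideanSubPToral p {z : EuclideanSpace ℝ (Fin (k + m)) |
      ∃ x ∈ X, ∃ y ∈ Y, z = prodPoint x y} := by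
  obtain ⟨n, hkn, ι, hι, hιX⟩ := (euclideanSubPToral_iff p X).1 hX
  obtain ⟨n', hmn', ι', hι', hι'Y⟩ := (euclideanSubPToral_iff p Y).1 hY
  have hsplit : ∀ z : {z : EuclideanSpace ℝ (Fin (k + m)) | ∃ x ∈ X, ∃ y ∈ Y, z = prodPoint x y},
      ∃ xy : X × Y, (z : EuclideanSpace ℝ (Fin (k + m))) = prodPoint xy.1 xy.2 := by
    rintro ⟨_, x, hx, y, hy, rfl⟩
    exact ⟨(⟨x, hx⟩, ⟨y, hy⟩), rfl⟩
  choose xy hxy using hsplit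
  refine (euclideanSubPToral_iff p _).2 ⟨n + n', add_le_add hkn hmn',
    fun z => prodPoint (ι (xy z).1) (ι' (xy z).2), fun z w => ?_, ?_⟩
  · rw [dist_prodPoint, hι, hι', hxy z, hxy w, dist_prodPoint]
  · refine ((hιX.withLpProd 2 hι'Y).image
      (EuclideanSpace.finAddIsometryEquivProd n n').symm).mono ?_
    rintro _ ⟨z, rfl⟩
    exact ⟨_, ⟨_, ⟨Set.mem_range_self _, Set.mem_range_self _⟩, rfl⟩,
      (prodPoint_eq_symm_toLp _ _).symm⟩

/-- **Lemma 5.** If `X ⊆ ℝ^k` and `Y ⊆ ℝ^m` are finite Euclidean sub-p-toral sets, then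
so is the Cartesian product `X × Y ⊆ ℝ^{k+m}`. -/
theorem euclideanSubPToral_prod (p : ℕ) (hp : p.Prime) {k m : ℕ}
    (X : Set (EuclideanSpace ℝ (Fin k))) (Y : Set (EuclideanSpace ℝ (Fin m)))
    (hXfin : X.Finite) (hYfin : Y.Finite)
    (hX : EuclideanSubPToral p X) (hY : EuclideanSubPToral p Y) :
    EuclideanSubPToral p {z : EuclideanSpace ℝ (Fin (k + m)) |
      ∃ x ∈ X, ∃ y ∈ Y, z = prodPoint x y} :=
  euclideanSubPToral_prod_general p X Y hX hY
end

section
/- For every angle α with 0 < α < π there exists p_0 = p_0(α) such that for every prime p ≥ p_0 there exist N ≥ 1, a Euclidean sub-p-toral set X ⊆ R^N, and three points A, B, C ∈ X with ‖A − B‖ = ‖A − C‖ > 0 and with the angle between the vectors B − A and C − A equal to α (an isosceles triangle with apex angle α contained in X). -/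
open Real

/-!
Let `g` be the rotation of `ℂ² ≅ ℝ⁴` multiplying the two coordinates by the `p`-th roots of
unity `ζ = exp (2πi/p)` and `ζ^((p-1)/2) = -exp (-πi/p)`. It has order `p`, so for every `v` the
points `v, g v, g⁻¹ v` lie in one orbit of a group `≅ ℤ/p`, and they form an isosceles triangle
with apex `v`. The cosine of its apex angle is minus the average of `Re ζ = cos (2π/p)` and
`Re ζ^((p-1)/2) = -cos (π/p)` with weights `‖vᵢ‖² (1 - Re ζᵢ)`, which can be chosen freely; for
large `p` these two values enclose `-cos α`.
-/

open InnerProductGeometry Filter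

theorem InnerProductGeometry.angle_eq_of_inner_eq_norm_sq_mul_cos {V : Type*}
    [NormedAddCommGroup V] [InnerProductSpace ℝ V] {x y : V} {α : ℝ} (hα₀ : 0 ≤ α) (hαπ : α ≤ π)
    (hx : x ≠ 0) (hxy : ‖x‖ = ‖y‖) (h : inner ℝ x y = ‖x‖ ^ 2 * cos α) : angle x y = α := by
  rw [angle, h, ← hxy, sq, mul_div_cancel_left₀ _ (by simpa using hx), arccos_cos hα₀ hαπ]

theorem nonempty_zpowers_mulEquiv_of_orderOf_eq {G : Type*} [Group G] {g : G} {p : ℕ}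
    (hg : orderOf g = p) : Nonempty (Subgroup.zpowers g ≃* Multiplicative (Fin 1 → ZMod p)) := by
  have e := (zmodCyclicMulEquiv (inferInstance : IsCyclic (Subgroup.zpowers g))).symm
  rw [Nat.card_zpowers, hg] at e
  exact ⟨e.trans (LinearEquiv.funUnique (Fin 1) ℤ (ZMod p)).symm.toAddEquiv.toMultiplicative⟩

namespace LinearIsometryEquiv

variable {R E F : Type*} [Semiring R] [SeminormedAddCommGroup E] [SeminormedAddCommGroup F]
  [Module R E] [Module R F]

def conjIsometryEquiv (e : E ≃ₗᵢ[R] F) : (E ≃ₗᵢ[R] E) →* (F ≃ᵢ F) where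
  toFun g := (e.symm.trans (g.trans e)).toIsometryEquiv
  map_one' := by ext; simp
  map_mul' g h := by ext; simp

theorem conjIsometryEquiv_apply_apply (e : E ≃ₗᵢ[R] F) (g : E ≃ₗᵢ[R] E) (x : E) :
    e.conjIsometryEquiv g (e x) = e (g x) := by
  simp [conjIsometryEquiv]

theorem conjIsometryEquiv_injective (e : E ≃ₗᵢ[R] F) : Function.Injective e.conjIsometryEquiv :=
  fun g h hgh => ext fun x => e.injective <| by
    rw [← conjIsometryEquiv_apply_apply, hgh, conjIsometryEquiv_apply_apply]

theorem norm_inv_apply_sub_self (g : E ≃ₗᵢ[R] E) (v : E) : ‖g⁻¹ v - v‖ = ‖g v - v‖ := by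
  rw [← g.norm_map, map_sub, coe_inv, g.apply_symm_apply, norm_sub_rev]

end LinearIsometryEquiv

theorem euclideanSubPToral_image_of_subset_range_zpow {E : Type*} [SeminormedAddCommGroup E]
    [NormedSpace ℝ E] {n p : ℕ} (e : E ≃ₗᵢ[ℝ] EuclideanSpace ℝ (Fin n)) {g : E ≃ₗᵢ[ℝ] E}
    (hg : orderOf g = p) {v : E} {S : Set E} (hS : S ⊆ Set.range fun k : ℤ => (g ^ k) v) :
    EuclideanSubPToral p (e '' S) := by
  set h := e.conjIsometryEquiv g
  have hh : orderOf h = p := by rw [orderOf_injective _ e.conjIsometryEquiv_injective, hg]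
  refine ⟨n, le_rfl, (↑), fun _ _ => rfl, Subgroup.zpowers h, 1,
    nonempty_zpowers_mulEquiv_of_orderOf_eq hh, e v, ?_⟩
  rintro ⟨_, x, hx, rfl⟩
  obtain ⟨k, rfl⟩ := hS hx
  exact ⟨h ^ k, Subgroup.zpow_mem_zpowers h k, by rw [← map_zpow, e.conjIsometryEquiv_apply_apply]⟩

theorem exists_euclideanSubPToral_isosceles_of_orderOf_eq {E : Type*} [NormedAddCommGroup E]
    [InnerProductSpace ℝ E] [FiniteDimensional ℝ E] {p : ℕ} {g : E ≃ₗᵢ[ℝ] E}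
    (hg : orderOf g = p) {v : E} (hv : g v ≠ v) :
    ∃ N : ℕ, 1 ≤ N ∧ ∃ X : Set (EuclideanSpace ℝ (Fin N)), X.Finite ∧
      EuclideanSubPToral p X ∧
      ∃ A B C : EuclideanSpace ℝ (Fin N), A ∈ X ∧ B ∈ X ∧ C ∈ X ∧
        ‖A - B‖ = ‖A - C‖ ∧ 0 < ‖A - B‖ ∧
        angle (B - A) (C - A) = angle (g v - v) (g⁻¹ v - v) := by
  have : Nontrivial E := nontrivial_of_ne _ _ hv
  let e := (stdOrthonormalBasis ℝ E).repr
  have hS : {v, g v, g⁻¹ v} ⊆ Set.range fun k : ℤ => (g ^ k) v := by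
    rintro _ (rfl | rfl | rfl)
    exacts [⟨0, rfl⟩, ⟨1, by simp⟩, ⟨-1, by simp⟩]
  have hleg : ‖v - g v‖ = ‖v - g⁻¹ v‖ := by
    rw [norm_sub_rev, ← g.norm_inv_apply_sub_self, norm_sub_rev]
  refine ⟨_, Module.finrank_pos, e '' {v, g v, g⁻¹ v}, (Set.toFinite _).image _,
    euclideanSubPToral_image_of_subset_range_zpow e hg hS, e v, e (g v), e (g⁻¹ v),
    by simp, by simp, by simp, ?_, ?_, ?_⟩
  · simpa only [← map_sub, LinearIsometryEquiv.norm_map] using hleg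
  · simpa only [← map_sub, LinearIsometryEquiv.norm_map, norm_pos_iff, sub_ne_zero] using hv.symm
  · rw [← map_sub, ← map_sub]
    exact e.toLinearIsometry.angle_map _ _

theorem Circle.norm_mul_sub_self_sq (c : Circle) (w : ℂ) :
    ‖c * w - w‖ ^ 2 = 2 * ‖w‖ ^ 2 * (1 - (c : ℂ).re) := by
  have hc := Circle.normSq_coe c
  simp only [← Complex.normSq_eq_norm_sq, Complex.normSq_apply, Complex.sub_re, Complex.sub_im,
    Complex.mul_re, Complex.mul_im] at hc ⊢
  linear_combination (w.re ^ 2 + w.im ^ 2) * hc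

theorem Circle.inner_mul_sub_self_inv_mul_sub_self (c : Circle) (w : ℂ) :
    inner ℝ (c * w - w) (↑c⁻¹ * w - w) = -2 * ‖w‖ ^ 2 * (1 - (c : ℂ).re) * (c : ℂ).re := by
  have hc := Circle.normSq_coe c
  simp only [Circle.coe_inv_eq_conj, Complex.inner, ← Complex.normSq_eq_norm_sq,
    Complex.normSq_apply, Complex.sub_re, Complex.sub_im, Complex.mul_re, Complex.mul_im,
    Complex.conj_re, Complex.conj_im] at hc ⊢
  linear_combination -(w.re ^ 2 + w.im ^ 2) * hc

section diagRotation

variable {ι : Type*} [Fintype ι]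

noncomputable def diagRotation :
    (ι → Circle) →* (EuclideanSpace ℂ ι ≃ₗᵢ[ℝ] EuclideanSpace ℂ ι) where
  toFun c := LinearIsometryEquiv.piLpCongrRight 2 fun i => rotation (c i)
  map_one' := by ext; simp
  map_mul' c d := by ext; simp

@[simp]
theorem diagRotation_apply (c : ι → Circle) (v : EuclideanSpace ℂ ι) (i : ι) :
    diagRotation c v i = c i * v i :=
  rfl

theorem norm_diagRotation_sub_sq (c : ι → Circle) (v : EuclideanSpace ℂ ι) :
    ‖diagRotation c v - v‖ ^ 2 = 2 * ∑ i, ‖v i‖ ^ 2 * (1 - (c i : ℂ).re) := by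
  simp only [EuclideanSpace.norm_sq_eq, PiLp.sub_apply, diagRotation_apply,
    Circle.norm_mul_sub_self_sq, Finset.mul_sum, mul_assoc]

theorem inner_diagRotation_sub_inv_sub (c : ι → Circle) (v : EuclideanSpace ℂ ι) :
    inner ℝ (diagRotation c v - v) ((diagRotation c)⁻¹ v - v) =
      -2 * ∑ i, ‖v i‖ ^ 2 * (1 - (c i : ℂ).re) * (c i : ℂ).re := by
  simp only [← map_inv, PiLp.inner_apply, PiLp.sub_apply, diagRotation_apply, Pi.inv_apply,
    Circle.inner_mul_sub_self_inv_mul_sub_self, Finset.mul_sum, mul_assoc]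

theorem diagRotation_apply_ne_self {c : ι → Circle} {v : EuclideanSpace ℂ ι}
    (hpos : 0 < ∑ i, ‖v i‖ ^ 2 * (1 - (c i : ℂ).re)) :
    diagRotation c v ≠ v := by
  intro h
  have hnorm := norm_diagRotation_sub_sq c v
  rw [h, sub_self, norm_zero, zero_pow two_ne_zero] at hnorm
  linarith

theorem angle_diagRotation_sub_inv_sub (c : ι → Circle) (v : EuclideanSpace ℂ ι) {α : ℝ}
    (hα₀ : 0 ≤ α) (hαπ : α ≤ π)
    (hpos : 0 < ∑ i, ‖v i‖ ^ 2 * (1 - (c i : ℂ).re))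
    (hcos : ∑ i, ‖v i‖ ^ 2 * (1 - (c i : ℂ).re) * (c i : ℂ).re =
      -cos α * ∑ i, ‖v i‖ ^ 2 * (1 - (c i : ℂ).re)) :
    angle (diagRotation c v - v) ((diagRotation c)⁻¹ v - v) = α := by
  refine angle_eq_of_inner_eq_norm_sq_mul_cos hα₀ hαπ
    (sub_ne_zero.2 (diagRotation_apply_ne_self hpos))
    ((diagRotation c).norm_inv_apply_sub_self v).symm ?_
  rw [inner_diagRotation_sub_inv_sub, hcos, norm_diagRotation_sub_sq]
  ring

end diagRotation

theorem exists_angle_diagRotation_sub_inv_sub_eq {α : ℝ} (hα₀ : 0 ≤ α) (hαπ : α ≤ π)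
    {c : Fin 2 → Circle} (h₁ : (c 1 : ℂ).re < -cos α) (h₀ : -cos α < (c 0 : ℂ).re)
    (h₀' : (c 0 : ℂ).re < 1) :
    ∃ v, diagRotation c v ≠ v ∧ angle (diagRotation c v - v) ((diagRotation c)⁻¹ v - v) = α := by
  -- the weights for which the weighted average of `(c 0).re` and `(c 1).re` is `-cos α`
  let a : Fin 2 → ℝ := ![-(c 1 : ℂ).re - cos α, (c 0 : ℂ).re + cos α]
  have hc : ∀ i, 0 < 1 - (c i : ℂ).re := Fin.forall_fin_two.2 ⟨by linarith, by linarith⟩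
  have ha : ∀ i, 0 < a i := Fin.forall_fin_two.2 ⟨by simp [a]; linarith, by simp [a]; linarith⟩
  let v : EuclideanSpace ℂ (Fin 2) := WithLp.toLp 2 fun i => (√(a i / (1 - (c i : ℂ).re)) : ℂ)
  have hw : ∀ i, ‖v i‖ ^ 2 * (1 - (c i : ℂ).re) = a i := fun i => by
    rw [PiLp.toLp_apply, Complex.norm_real, norm_eq_abs, sq_abs,
      sq_sqrt (div_pos (ha i) (hc i)).le, div_mul_cancel₀ _ (hc i).ne']
  have hpos : 0 < ∑ i, ‖v i‖ ^ 2 * (1 - (c i : ℂ).re) := by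
    simp only [hw]; exact Finset.sum_pos (fun i _ => ha i) Finset.univ_nonempty
  refine ⟨v, diagRotation_apply_ne_self hpos, angle_diagRotation_sub_inv_sub c v hα₀ hαπ hpos ?_⟩
  simp only [Fin.sum_univ_two, hw, a, Matrix.cons_val_zero, Matrix.cons_val_one]
  ring

theorem Circle.exp_two_pi_mul_div_pow (k : ℤ) {p : ℕ} (hp : p ≠ 0) :
    Circle.exp (2 * π * k / p) ^ p = 1 := by
  rw [← Circle.exp_natCast_mul, mul_div_cancel₀ _ (Nat.cast_ne_zero.2 hp),
    Circle.exp_two_pi_mul_int]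

theorem exists_pow_eq_one_re_lt_neg_cos_lt_re {p : ℕ} (hp : Odd p) {α : ℝ} (h₁ : π / p < α)
    (h₂ : 2 * π / p < π - α) :
    ∃ c : Fin 2 → Circle, c ^ p = 1 ∧
      (c 1 : ℂ).re < -cos α ∧ -cos α < (c 0 : ℂ).re ∧ (c 0 : ℂ).re < 1 := by
  obtain ⟨k, rfl⟩ := hp
  have hp₀ : (0 : ℝ) < 2 * k + 1 := by positivity
  push_cast at h₁ h₂
  have hα₀ : 0 < α := (div_pos pi_pos hp₀).trans h₁
  have hθ₀ : 0 < 2 * π / (2 * k + 1) := by positivity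
  have hθ₁ : 2 * π * k / (2 * k + 1) = π - π / (2 * k + 1) := by field_simp; ring
  refine ⟨![Circle.exp (2 * π * (1 : ℤ) / (2 * k + 1 : ℕ)),
    Circle.exp (2 * π * (k : ℤ) / (2 * k + 1 : ℕ))], ?_, ?_, ?_, ?_⟩
  · ext1 i
    fin_cases i <;> exact Circle.exp_two_pi_mul_div_pow _ (by omega)
  all_goals simp only [Matrix.cons_val_zero, Matrix.cons_val_one, Circle.coe_exp,
    Complex.exp_ofReal_mul_I_re]
  all_goals push_cast
  · rw [hθ₁, cos_pi_sub, neg_lt_neg_iff]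
    exact cos_lt_cos_of_nonneg_of_le_pi (by positivity) (by linarith) h₁
  · rw [mul_one, ← cos_pi_sub]
    exact cos_lt_cos_of_nonneg_of_le_pi hθ₀.le (by linarith) h₂
  · rw [mul_one]
    simpa using cos_lt_cos_of_nonneg_of_le_pi le_rfl (by linarith) hθ₀

/-- **Lemma 8 (all isosceles apex angles occur in sub-p-toral sets).** For every
`0 < α < π` there is `p₀` such that for every prime `p ≥ p₀` some finite Euclidean
sub-p-toral set contains an isosceles triangle with apex angle `α`. -/
theorem exists_subPToral_with_isosceles_triangle (α : ℝ) (hα₀ : 0 < α) (hαπ : α < π) :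
    ∃ p₀ : ℕ, ∀ p : ℕ, p.Prime → p₀ ≤ p →
      ∃ N : ℕ, 1 ≤ N ∧ ∃ X : Set (EuclideanSpace ℝ (Fin N)), X.Finite ∧
        EuclideanSubPToral p X ∧
        ∃ A B C : EuclideanSpace ℝ (Fin N), A ∈ X ∧ B ∈ X ∧ C ∈ X ∧
          ‖A - B‖ = ‖A - C‖ ∧ 0 < ‖A - B‖ ∧
          InnerProductGeometry.angle (B - A) (C - A) = α := by
  have hsmall : ∀ᶠ p : ℕ in atTop, π / p < α ∧ 2 * π / p < π - α :=
    ((tendsto_const_div_atTop_nhds_zero_nat π).eventually (gt_mem_nhds hα₀)).and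
      ((tendsto_const_div_atTop_nhds_zero_nat (2 * π)).eventually (gt_mem_nhds (by linarith)))
  obtain ⟨p₀, hp₀⟩ := eventually_atTop.1 (hsmall.and (eventually_ge_atTop 3))
  refine ⟨p₀, fun p hp hpp₀ => ?_⟩
  obtain ⟨⟨h₁, h₂⟩, hp₃⟩ := hp₀ p hpp₀
  have : Fact p.Prime := ⟨hp⟩
  obtain ⟨c, hcp, hc₁, hc₀, hc₀'⟩ :=
    exists_pow_eq_one_re_lt_neg_cos_lt_re (hp.odd_of_ne_two (by omega)) h₁ h₂
  obtain ⟨v, hv, hangle⟩ := exists_angle_diagRotation_sub_inv_sub_eq hα₀.le hαπ.le hc₁ hc₀ hc₀'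
  have hg : orderOf (diagRotation c) = p :=
    orderOf_eq_prime (by rw [← map_pow, hcp, map_one]) fun h => hv (by rw [h]; rfl)
  rw [← hangle]
  exact exists_euclideanSubPToral_isosceles_of_orderOf_eq hg hv
end

section
/- For every ε > 0 and every positive integer m there exists p_0 = p_0(ε, m) such that for every prime p ≥ p_0 there exist N ≥ 1 and a Euclidean sub-p-toral set B = {b_1, …, b_m} ⊆ R^N satisfying | ‖b_i − b_j‖ − |i − j| | < ε for all 1 ≤ i, j ≤ m. (One may take B to be m consecutive vertices of a suitably scaled regular p-gon.) -/
/-! Rotation by `2π / p` generates a group of isometries of the plane isomorphic to `ℤ/p`, and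
the vertices of a regular `p`-gon form one of its orbits, so every set of vertices is
sub-`p`-toral. Scaling the circumradius to `r = p / 2π` puts consecutive vertices at arc
distance `1`, so vertices `i` and `j` are at chord distance `2r sin(|i - j| / 2r)`, which differs
from the arc length `|i - j| ≤ m` by at most `m³ / 24r² = O(m³ / p²)`. -/

open Real Filter

theorem abs_two_mul_abs_sin_sub_abs_le {r : ℝ} (hr : 0 < r) (t : ℝ) :
    abs (2 * r * |sin (t / (2 * r))| - |t|) ≤ |t| ^ 3 / (24 * r ^ 2) := by
  set x := t / (2 * r) with hx
  have ht : t = 2 * r * x := by rw [hx]; field_simp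
  have h2r : |2 * r| = 2 * r := abs_of_pos (by positivity)
  calc abs (2 * r * |sin x| - |t|)
      = 2 * r * abs (|sin x| - |x|) := by rw [ht, abs_mul, h2r, ← mul_sub, abs_mul, h2r]
    _ ≤ 2 * r * (|x| ^ 3 / 6) := by
        gcongr
        exact (abs_abs_sub_abs_le_abs_sub _ _).trans (abs_sub_comm (sin x) x ▸ abs_sub_sin_le x)
    _ = |t| ^ 3 / (24 * r ^ 2) := by
        rw [ht, abs_mul, h2r]
        field_simp
        ring

theorem EuclideanSubPToral.of_subset_orbit {p k α : ℕ} {X : Set (EuclideanSpace ℝ (Fin k))}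
    {H : Type*} [Group H]
    (ρ : H →* (EuclideanSpace ℝ (Fin k) ≃ᵢ EuclideanSpace ℝ (Fin k)))
    (hρ : Function.Injective ρ) (e : H ≃* Multiplicative (Fin α → ZMod p))
    (v : EuclideanSpace ℝ (Fin k)) (hX : X ⊆ Set.range fun h => ρ h v) :
    EuclideanSubPToral p X := by
  refine ⟨k, le_rfl, (↑), fun _ _ => rfl, ρ.range, α,
    ⟨(MonoidHom.ofInjective hρ).symm.trans e⟩, v, fun ⟨x, hx⟩ => ?_⟩
  obtain ⟨h, rfl⟩ := hX hx
  exact ⟨ρ h, ⟨h, rfl⟩, rfl⟩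

namespace IsometryEquiv

variable {α β : Type*} [PseudoEMetricSpace α] [PseudoEMetricSpace β]

def conjMulEquiv (e : α ≃ᵢ β) : (α ≃ᵢ α) ≃* (β ≃ᵢ β) where
  toFun g := (e.symm.trans g).trans e
  invFun g := (e.trans g).trans e.symm
  left_inv g := by ext; simp
  right_inv g := by ext; simp
  map_mul' g h := by ext; simp [mul_apply]

end IsometryEquiv

namespace LinearIsometryEquiv

variable {R E : Type*} [Semiring R] [SeminormedAddCommGroup E] [Module R E]

def toIsometryEquivHom : (E ≃ₗᵢ[R] E) →* (E ≃ᵢ E) where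
  toFun f := f.toIsometryEquiv
  map_one' := rfl
  map_mul' _ _ := rfl

theorem toIsometryEquivHom_injective :
    Function.Injective (toIsometryEquivHom : (E ≃ₗᵢ[R] E) →* (E ≃ᵢ E)) :=
  fun _ _ h => toIsometryEquiv_injective h

end LinearIsometryEquiv

noncomputable section

def regularPolygonVertex (N : ℕ) [NeZero N] (r : ℝ) (j : ZMod N) : EuclideanSpace ℝ (Fin 2) :=
  Complex.orthonormalBasisOneI.repr ((ZMod.toCircle j : ℂ) * r)

def regularPolygonRotation (N : ℕ) [NeZero N] :
    Multiplicative (ZMod N) →* (EuclideanSpace ℝ (Fin 2) ≃ᵢ EuclideanSpace ℝ (Fin 2)) :=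
  (Complex.orthonormalBasisOneI.repr.toIsometryEquiv.conjMulEquiv.toMonoidHom.comp
    LinearIsometryEquiv.toIsometryEquivHom).comp (rotation.comp ZMod.toCircle.toMonoidHom)

variable {N : ℕ} [NeZero N]

theorem regularPolygonRotation_injective : Function.Injective (regularPolygonRotation N) := by
  refine (IsometryEquiv.conjMulEquiv _).injective.comp <|
    LinearIsometryEquiv.toIsometryEquivHom_injective.comp <| rotation_injective.comp fun _ _ h => ?_
  exact Multiplicative.toAdd.injective (ZMod.injective_toCircle h)

theorem regularPolygonRotation_apply_vertex (r : ℝ) (j k : ZMod N) :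
    regularPolygonRotation N (.ofAdd j) (regularPolygonVertex N r k) =
      regularPolygonVertex N r (j + k) := by
  change Complex.orthonormalBasisOneI.repr
    (rotation _ (Complex.orthonormalBasisOneI.repr.symm (Complex.orthonormalBasisOneI.repr _))) = _
  rw [LinearIsometryEquiv.symm_apply_apply, rotation_apply, AddChar.toMonoidHom_apply,
    toAdd_ofAdd, regularPolygonVertex, AddChar.map_add_eq_mul, Circle.coe_mul, mul_assoc]

theorem euclideanSubPToral_of_subset_range_regularPolygonVertex (r : ℝ)
    {X : Set (EuclideanSpace ℝ (Fin 2))} (hX : X ⊆ Set.range (regularPolygonVertex N r)) :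
    EuclideanSubPToral N X := by
  refine .of_subset_orbit (regularPolygonRotation N) regularPolygonRotation_injective
    (AddEquiv.funUnique (Fin 1) (ZMod N)).symm.toMultiplicative (regularPolygonVertex N r 0)
    (hX.trans ?_)
  rintro _ ⟨j, rfl⟩
  exact ⟨.ofAdd j, by simp only [regularPolygonRotation_apply_vertex, add_zero]⟩

theorem norm_regularPolygonVertex_sub (r : ℝ) (i j : ℕ) :
    ‖regularPolygonVertex N r i - regularPolygonVertex N r j‖ =
      2 * |r| * |sin (π * (i - j) / N)| := by
  have hexp : (ZMod.toCircle (i : ZMod N) : ℂ) - ZMod.toCircle (j : ZMod N) =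
      ZMod.toCircle (j : ZMod N) * (Complex.exp (Complex.I * ↑(2 * π * (i - j) / N)) - 1) := by
    rw [ZMod.toCircle_natCast, ZMod.toCircle_natCast, mul_sub, mul_one, ← Complex.exp_add]
    congr 2
    push_cast
    ring
  rw [regularPolygonVertex, regularPolygonVertex, ← map_sub, LinearIsometryEquiv.norm_map,
    ← sub_mul, hexp, norm_mul, norm_mul, Circle.norm_coe, one_mul,
    Complex.norm_exp_I_mul_ofReal_sub_one, Complex.norm_real, norm_mul, Real.norm_eq_abs,
    Real.norm_eq_abs, Real.norm_eq_abs, abs_two]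
  ring_nf

theorem abs_norm_regularPolygonVertex_sub_sub_abs_le (i j : ℕ) :
    abs (‖regularPolygonVertex N (N / (2 * π)) i - regularPolygonVertex N (N / (2 * π)) j‖ -
      |(i : ℝ) - j|) ≤ |(i : ℝ) - j| ^ 3 / (24 * (N / (2 * π)) ^ 2) := by
  have hN : (N : ℝ) ≠ 0 := NeZero.ne _
  have hr : 0 < (N : ℝ) / (2 * π) := by positivity
  have harg : π * ((i : ℝ) - j) / N = ((i : ℝ) - j) / (2 * (N / (2 * π))) := by field_simp
  rw [norm_regularPolygonVertex_sub, abs_of_pos hr, harg]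
  exact abs_two_mul_abs_sin_sub_abs_le hr _

end

theorem exists_subPToral_near_arithmetic_progression_general (ε : ℝ) (hε : 0 < ε)
    (m : ℕ) :
    ∃ p₀ : ℕ, ∀ p : ℕ, p.Prime → p₀ ≤ p →
      ∃ N : ℕ, 1 ≤ N ∧ ∃ b : Fin m → EuclideanSpace ℝ (Fin N),
        EuclideanSubPToral p (Set.range b) ∧
        ∀ i j : Fin m, abs (‖b i - b j‖ - |(i.val : ℝ) - (j.val : ℝ)|) < ε := by
  have hsmall : ∀ᶠ p : ℕ in atTop, (m : ℝ) ^ 3 / (24 * (p / (2 * π)) ^ 2) < ε := by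
    have hgrow : Tendsto (fun p : ℕ => 24 * ((p : ℝ) / (2 * π)) ^ 2) atTop atTop :=
      ((tendsto_pow_atTop two_ne_zero).comp
        (tendsto_natCast_atTop_atTop.atTop_div_const (by positivity))).const_mul_atTop (by norm_num)
    exact (tendsto_const_nhds.div_atTop hgrow).eventually (gt_mem_nhds hε)
  obtain ⟨p₀, hp₀⟩ := eventually_atTop.1 (hsmall.and (eventually_ge_atTop 1))
  refine ⟨p₀, fun p _ hp => ?_⟩
  obtain ⟨hpε, hp1⟩ := hp₀ p hp
  have : NeZero p := ⟨by omega⟩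
  refine ⟨2, one_le_two, fun j => regularPolygonVertex p (p / (2 * π)) (j : ℕ),
    euclideanSubPToral_of_subset_range_regularPolygonVertex _
      (Set.range_subset_iff.2 fun _ => ⟨_, rfl⟩),
    fun i j => (abs_norm_regularPolygonVertex_sub_sub_abs_le i j).trans_lt (hpε.trans_le' ?_)⟩
  have hdist : |(i : ℝ) - j| ≤ m := abs_sub_le_of_nonneg_of_le (by positivity)
    (by exact_mod_cast i.2.le) (by positivity) (by exact_mod_cast j.2.le)
  gcongr

/-- **Lemma 10 (sub-p-toral almost-arithmetic progressions).** For every `ε > 0` and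
every positive integer `m` there is `p₀` such that for every prime `p ≥ p₀` there is a
Euclidean sub-p-toral set `{b₁, …, b_m}` with `| ‖bᵢ - bⱼ‖ - |i - j| | < ε` for all
`i, j`. (One may take `m` consecutive vertices of a suitably scaled regular `p`-gon.) -/
theorem exists_subPToral_near_arithmetic_progression (ε : ℝ) (hε : 0 < ε)
    (m : ℕ) (hm : 0 < m) :
    ∃ p₀ : ℕ, ∀ p : ℕ, p.Prime → p₀ ≤ p →
      ∃ N : ℕ, 1 ≤ N ∧ ∃ b : Fin m → EuclideanSpace ℝ (Fin N),
        EuclideanSubPToral p (Set.range b) ∧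
        ∀ i j : Fin m, abs (‖b i - b j‖ - |(i.val : ℝ) - (j.val : ℝ)|) < ε :=
  exists_subPToral_near_arithmetic_progression_general ε hε m
end

section
/- Let S = {s_0, …, s_n} ⊆ R^n be the vertex set of a regular n-dimensional simplex, i.e., n+1 points with ‖s_i − s_j‖ equal to a fixed ℓ > 0 for all i ≠ j. Then there exists δ > 0 such that every set A = {a_0, …, a_n} ⊆ R^n with ‖a_i − s_i‖ < δ for all i is Euclidean sub-p-toral for every prime p ≥ 2. -/
noncomputable section

namespace Equiv.Perm

variable {ι : Type*} [Fintype ι]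

def toEuclideanIsometry : Perm ι →* (EuclideanSpace ℝ ι ≃ᵢ EuclideanSpace ℝ ι) where
  toFun σ := (LinearIsometryEquiv.piLpCongrLeft 2 ℝ ℝ σ).toIsometryEquiv
  map_one' := by ext; rfl
  map_mul' σ τ := by ext; rfl

@[simp]
theorem toEuclideanIsometry_apply (σ : Perm ι) (v : EuclideanSpace ℝ ι) (i : ι) :
    σ.toEuclideanIsometry v i = v (σ.symm i) :=
  rfl

theorem toEuclideanIsometry_injective :
    Function.Injective (toEuclideanIsometry (ι := ι)) := by
  classical
  intro σ τ h
  ext i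
  have := congrArg (fun g => g (EuclideanSpace.single i (1 : ℝ)) (σ i)) h
  simpa [eq_comm (a := i), Equiv.symm_apply_eq] using this

theorem toEuclideanIsometry_permCongr {κ : Type*} [Fintype κ] (e : ι ≃ κ) (σ : Perm ι)
    (v : EuclideanSpace ℝ ι) :
    (e.permCongr σ).toEuclideanIsometry (LinearIsometryEquiv.piLpCongrLeft 2 ℝ ℝ e v) =
      LinearIsometryEquiv.piLpCongrLeft 2 ℝ ℝ e (σ.toEuclideanIsometry v) := by
  ext i
  simp [Equiv.permCongr_def]

end Equiv.Perm

section FiberShift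

variable {T M : Type*}

variable (T M) in
def fiberShift [AddCommGroup M] : Multiplicative (T → M) →* Equiv.Perm (T × M) where
  toFun z := Equiv.prodShear (Equiv.refl T) fun t => Equiv.addRight (z.toAdd t)
  map_one' := by ext <;> simp
  map_mul' z w := by ext <;> simp [add_comm, add_left_comm]

theorem fiberShift_injective [AddCommGroup M] : Function.Injective (fiberShift T M) := by
  intro z w h
  ext t
  simpa [fiberShift] using congrArg (fun σ : Equiv.Perm (T × M) => (σ (t, 0)).2) h

def graphIndicator [DecidableEq M] (r : T → ℝ) (u : T → M) : EuclideanSpace ℝ (T × M) :=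
  WithLp.toLp 2 fun q => if q.2 = u q.1 then r q.1 else 0

variable [Fintype T] [Fintype M] [DecidableEq M]

theorem toEuclideanIsometry_fiberShift_graphIndicator [AddCommGroup M] (r : T → ℝ) (u : T → M)
    (z : Multiplicative (T → M)) :
    (fiberShift T M z).toEuclideanIsometry (graphIndicator r u) =
      graphIndicator r (u + z.toAdd) := by
  ext q
  simp [graphIndicator, fiberShift, ← sub_eq_add_neg, sub_eq_iff_eq_add]

theorem sum_sq_dist_ite_eq (x : ℝ) (m m' : M) :
    ∑ b : M, dist (if b = m then x else 0) (if b = m' then x else 0) ^ 2 =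
      if m = m' then 0 else 2 * x ^ 2 := by
  split_ifs with h
  · simp [h]
  · have (b : M) : dist (if b = m then x else 0) (if b = m' then x else 0) ^ 2 =
        (if b = m then x ^ 2 else 0) + (if b = m' then x ^ 2 else 0) := by
      by_cases hb : b = m <;> by_cases hb' : b = m' <;> simp_all [Real.dist_eq]
    simp [this, Finset.sum_add_distrib, two_mul]

theorem dist_graphIndicator_sq (r : T → ℝ) (u u' : T → M) :
    dist (graphIndicator r u) (graphIndicator r u') ^ 2 =
      ∑ t, if u t = u' t then 0 else 2 * r t ^ 2 := by
  rw [EuclideanSpace.dist_eq, Real.sq_sqrt (by positivity), Fintype.sum_prod_type]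
  exact Finset.sum_congr rfl fun t _ => sum_sq_dist_ite_eq (r t) (u t) (u' t)

end FiberShift

theorem euclideanSubPToral_range_of_sq_dist_eq_sum {p k : ℕ} [NeZero p] {ι T : Type*}
    [Fintype T] (a : ι → EuclideanSpace ℝ (Fin k)) (τ : ι → T → ZMod p) (c : T → ℝ)
    (hc : ∀ t, 0 ≤ c t) (hk : k ≤ Fintype.card T * p)
    (hdist : ∀ i j, dist (a i) (a j) ^ 2 = ∑ t, if τ i t = τ j t then 0 else c t) :
    EuclideanSubPToral p (Set.range a) := by
  set r : T → ℝ := fun t => √(c t / 2)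
  have hr (i j : ι) :
      dist (graphIndicator r (τ i)) (graphIndicator r (τ j)) = dist (a i) (a j) := by
    refine (pow_left_inj₀ dist_nonneg dist_nonneg two_ne_zero).mp ?_
    rw [dist_graphIndicator_sq, hdist]
    congr! 2 with t
    rw [Real.sq_sqrt (by linarith [hc t])]
    ring
  let e := Fintype.equivFin (T × ZMod p)
  let E := (LinearIsometryEquiv.piLpCongrLeft 2 ℝ ℝ e).toIsometryEquiv
  let φ := Equiv.Perm.toEuclideanIsometry.comp
    (e.permCongrHom.toMonoidHom.comp (fiberShift T (ZMod p)))
  have hφ : Function.Injective φ := Equiv.Perm.toEuclideanIsometry_injective.comp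
    (e.permCongrHom.injective.comp fiberShift_injective)
  refine ⟨Fintype.card (T × ZMod p), by simpa using hk,
    fun x => E (graphIndicator r (τ x.2.choose)), fun x y => ?_, φ.range, Fintype.card T,
    ⟨(MonoidHom.ofInjective hφ).symm.trans
      (AddEquiv.arrowCongr (Fintype.equivFin T) (AddEquiv.refl _)).toMultiplicative⟩,
    E (graphIndicator r 0), fun x => ⟨φ (.ofAdd (τ x.2.choose)), ⟨_, rfl⟩, ?_⟩⟩
  · rw [E.dist_eq, hr, x.2.choose_spec, y.2.choose_spec]
  · simp [φ, E, Equiv.permCongrHom, Equiv.Perm.toEuclideanIsometry_permCongr,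
      toEuclideanIsometry_fiberShift_graphIndicator]

section PairCuts

variable {α : Type*} [Fintype α] [DecidableEq α]

theorem sum_pair_cut_eq (Q : α → α → ℝ) {i j : α} (hij : i ≠ j) :
    ∑ t : α × α, (if (t.1 = i ∨ t.2 = i) ↔ (t.1 = j ∨ t.2 = j) then 0 else Q t.1 t.2) =
      ∑ l, (Q i l + Q l i + Q j l + Q l j) - Q i i - Q j j - 2 * (Q i j + Q j i) := by
  have key (k l : α) : (if (k = i ∨ l = i) ↔ (k = j ∨ l = j) then 0 else Q k l) =
      (if k = i then Q k l else 0) + (if l = i then Q k l else 0) + (if k = j then Q k l else 0)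
        + (if l = j then Q k l else 0) - (if k = i ∧ l = i then Q k l else 0)
        - (if k = j ∧ l = j then Q k l else 0) - 2 * (if k = i ∧ l = j then Q k l else 0)
        - 2 * (if k = j ∧ l = i then Q k l else 0) := by
    by_cases hki : k = i <;> by_cases hli : l = i <;> by_cases hkj : k = j <;>
      by_cases hlj : l = j <;> simp_all <;> ring
  simp only [key, ite_and, mul_ite, mul_zero, Finset.sum_sub_distrib, Finset.sum_add_distrib,
    Fintype.sum_prod_type, Finset.sum_ite_irrel, Finset.sum_const_zero, Finset.sum_ite_eq',
    Finset.mem_univ, if_true]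
  ring

theorem card_sub_one_mul_le_sum (D : α → α → ℝ) (hdiag : ∀ i, D i i = 0) {L : ℝ}
    (hL : ∀ i j, i ≠ j → L ≤ D i j) (i : α) :
    ((Fintype.card α : ℝ) - 1) * L ≤ ∑ j, D i j :=
  calc ((Fintype.card α : ℝ) - 1) * L = ∑ j, (L - if j = i then L else 0) := by
        simp only [Finset.sum_sub_distrib, Finset.sum_const, Finset.card_univ, nsmul_eq_mul,
          Finset.sum_ite_eq', Finset.mem_univ, if_true]
        ring
    _ ≤ ∑ j, D i j := Finset.sum_le_sum fun j _ => by
        by_cases hj : j = i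
        · simp [hj, hdiag]
        · simpa [hj] using hL i j (Ne.symm hj)

theorem exists_nonneg_pair_cut_decomposition (D : α → α → ℝ) (hsymm : ∀ i j, D i j = D j i)
    (hdiag : ∀ i, D i i = 0) {L U : ℝ} (hL : ∀ i j, i ≠ j → L ≤ D i j)
    (hU : ∀ i j, i ≠ j → D i j ≤ U)
    (hLU : ((Fintype.card α : ℝ) - 2) * U ≤ ((Fintype.card α : ℝ) - 1) * L) :
    ∃ c : α × α → ℝ, (∀ t, 0 ≤ c t) ∧ ∀ i j,
      D i j = ∑ t : α × α, if (t.1 = i ∨ t.2 = i) ↔ (t.1 = j ∨ t.2 = j) then 0 else c t := by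
  set m : ℝ := (Fintype.card α : ℝ)
  -- `d` is forced by the identity for `i ≠ j`; the total weight of `(k, k)` is then
  -- `(∑ l, D k l - (m - 2) * U) / 2`, nonnegative by `hLU`.
  let d (k : α) : ℝ := (∑ l, D k l - (m - 2) * U) / 2 - U / 4
  let Q (k l : α) : ℝ := (U - D k l) / 4 + if k = l then d k else 0
  refine ⟨fun t => Q t.1 t.2, fun ⟨k, l⟩ => ?_, fun i j => ?_⟩
  · by_cases hkl : k = l
    · subst hkl
      have := card_sub_one_mul_le_sum D hdiag hL k
      simp only [Q, d, hdiag, if_true]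
      linarith
    · simp only [Q, hkl, if_false]
      linarith [hU k l hkl]
  · rcases eq_or_ne i j with rfl | hij
    · simp [hdiag]
    · have hcol (k : α) : ∑ l, D l k = ∑ l, D k l := Finset.sum_congr rfl fun l _ => hsymm l k
      rw [sum_pair_cut_eq Q hij]
      simp only [Q, d, Finset.sum_add_distrib, ← Finset.sum_div, Finset.sum_sub_distrib,
        Finset.sum_const, Finset.card_univ, nsmul_eq_mul, Finset.sum_ite_eq, Finset.sum_ite_eq',
        Finset.mem_univ, if_true, if_false, hcol, hdiag, hsymm j i, hij, hij.symm]
      ring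

end PairCuts

theorem abs_dist_sub_dist_lt {X ι : Type*} [PseudoMetricSpace X] {a s : ι → X} {δ : ℝ}
    (ha : ∀ i, dist (a i) (s i) < δ) (i j : ι) :
    |dist (a i) (a j) - dist (s i) (s j)| < 2 * δ := by
  have := dist_dist_dist_le (a i) (a j) (s i) (s j)
  rw [Real.dist_eq] at this
  linarith [ha i, ha j]

/-- **Lemma 12 (almost regular simplices are sub-p-toral for every prime).** Let
`s₀, …, s_n ∈ ℝⁿ` be the vertices of a regular simplex of side length `ℓ > 0`. Then
there is `δ > 0` such that every `{a₀, …, a_n}` with `‖aᵢ - sᵢ‖ < δ` for all `i` is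
Euclidean sub-p-toral for every prime `p`. -/
theorem almost_regular_simplex_subPToral {n : ℕ} (s : Fin (n + 1) → EuclideanSpace ℝ (Fin n))
    (ℓ : ℝ) (hℓ : 0 < ℓ) (hreg : ∀ i j : Fin (n + 1), i ≠ j → ‖s i - s j‖ = ℓ) :
    ∃ δ : ℝ, 0 < δ ∧
      ∀ a : Fin (n + 1) → EuclideanSpace ℝ (Fin n),
        (∀ i, ‖a i - s i‖ < δ) →
        ∀ p : ℕ, p.Prime → EuclideanSubPToral p (Set.range a) := by
  -- Small enough that `(n - 1) (ℓ + 2δ)² ≤ n (ℓ - 2δ)²`.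
  set δ : ℝ := ℓ / (8 * (n + 1)) with hδ
  have hδ₀ : 0 < δ := by positivity
  have hℓδ : ℓ = 8 * (n + 1) * δ := by rw [hδ]; field_simp
  have hn : (0 : ℝ) ≤ n := n.cast_nonneg
  have h2δ : 2 * δ < ℓ := by rw [hℓδ]; nlinarith
  refine ⟨δ, hδ₀, fun a ha p hp => ?_⟩
  have : Fact (1 < p) := ⟨hp.one_lt⟩
  have hnear (i j : Fin (n + 1)) (hij : i ≠ j) : |dist (a i) (a j) - ℓ| < 2 * δ := by
    have := abs_dist_sub_dist_lt (fun i => (dist_eq_norm (a i) (s i)).trans_lt (ha i)) i j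
    rwa [dist_eq_norm (s i), hreg i j hij] at this
  obtain ⟨c, hc, hD⟩ := exists_nonneg_pair_cut_decomposition (fun i j => dist (a i) (a j) ^ 2)
    (fun i j => by rw [dist_comm]) (fun i => by simp) (L := (ℓ - 2 * δ) ^ 2)
    (U := (ℓ + 2 * δ) ^ 2)
    (fun i j hij => pow_le_pow_left₀ (by linarith) (by linarith [(abs_lt.mp (hnear i j hij)).1]) 2)
    (fun i j hij => pow_le_pow_left₀ dist_nonneg (by linarith [(abs_lt.mp (hnear i j hij)).2]) 2)
    (by rw [Fintype.card_fin, Nat.cast_add, Nat.cast_one, hℓδ]; nlinarith)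
  refine euclideanSubPToral_range_of_sq_dist_eq_sum a
    (fun i t => if t.1 = i ∨ t.2 = i then (1 : ZMod p) else 0) c hc ?_ fun i j => ?_
  · rw [Fintype.card_prod, Fintype.card_fin]
    nlinarith [hp.pos]
  · rw [hD i j]
    refine Finset.sum_congr rfl fun t _ => if_congr ?_ rfl rfl
    by_cases hi : t.1 = i ∨ t.2 = i <;> by_cases hj : t.1 = j ∨ t.2 = j <;> simp [hi, hj]
end
end

section
/- Let p be a prime and λ ∈ [0, 1]. Suppose {A_1, B_1, C_1} ⊆ S^{k_1−1} and {A_2, B_2, C_2} ⊆ S^{k_2−1} are spherical sub-p-toral three-point sets. Then there exist m and a spherical sub-p-toral three-point set {A, B, C} ⊆ S^{m−1} with ‖A − B‖^2 = λ‖A_1 − B_1‖^2 + (1−λ)‖A_2 − B_2‖^2, ‖A − C‖^2 = λ‖A_1 − C_1‖^2 + (1−λ)‖A_2 − C_2‖^2, and ‖B − C‖^2 = λ‖B_1 − C_1‖^2 + (1−λ)‖B_2 − C_2‖^2. Hence the set of triples of squared side-lengths of spherical sub-p-toral triangles is convex. -/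
/-!
Scale the two configurations by `√λ` and `√(1 - λ)` and put them in orthogonal summands,
`A = √λ A₁ ⊕ √(1 - λ) A₂ ∈ ℝ^(k₁ + k₂)`; squared distances then add with weights `λ` and
`1 - λ`. If the triples lie in orbits `G₁ • v₁ ⊆ ℝ^n₁` and `G₂ • v₂ ⊆ ℝ^n₂` (after embedding),
the group `G₁ × G₂ ≃ (ℤ/p)^(α₁ + α₂)` acts diagonally on `ℝ^n₁ ⊕ ℝ^n₂ = ℝ^(n₁ + n₂)`, and the new
triple lies in its orbit of `√λ v₁ ⊕ √(1 - λ) v₂`.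
-/

/-- A set `X` of unit vectors in `ℝ^k` is *spherical sub-p-toral* if some image of `X`
under a linear isometric embedding into a possibly larger `ℝ^n` is contained in the
orbit of a unit vector under a subgroup of the orthogonal group of `ℝ^n` isomorphic to
`(ℤ/p)^α`. -/
def SphericalSubPToral (p : ℕ) {k : ℕ} (X : Set (EuclideanSpace ℝ (Fin k))) : Prop :=
  ∃ n : ℕ, k ≤ n ∧
    ∃ ι : EuclideanSpace ℝ (Fin k) →ₗᵢ[ℝ] EuclideanSpace ℝ (Fin n),
      ∃ (G : Subgroup (EuclideanSpace ℝ (Fin n) ≃ₗᵢ[ℝ] EuclideanSpace ℝ (Fin n))) (α : ℕ),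
        Nonempty (G ≃* Multiplicative (Fin α → ZMod p)) ∧
        ∃ v : EuclideanSpace ℝ (Fin n), ‖v‖ = 1 ∧
          ∀ x ∈ X, ∃ g ∈ G,
            (g : EuclideanSpace ℝ (Fin n) ≃ₗᵢ[ℝ] EuclideanSpace ℝ (Fin n)) v = ι x

def Multiplicative.finAppendMulEquiv (M : Type*) [AddCommMonoid M] (a b : ℕ) :
    Multiplicative (Fin a → M) × Multiplicative (Fin b → M) ≃*
      Multiplicative (Fin (a + b) → M) :=
  (MulEquiv.prodMultiplicative _ _).symm.trans <| AddEquiv.toMultiplicative <|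
    ((LinearEquiv.sumPiEquivProdPi ℕ (Fin a) (Fin b) fun _ ↦ M).symm.trans
      (LinearEquiv.piCongrLeft ℕ (fun _ ↦ M) finSumFinEquiv)).toAddEquiv

namespace LinearIsometryEquiv

section Conj

variable {R E F : Type*} [Semiring R] [SeminormedAddCommGroup E] [Module R E]
  [SeminormedAddCommGroup F] [Module R F]

def conjMulEquiv (e : E ≃ₗᵢ[R] F) : (E ≃ₗᵢ[R] E) ≃* (F ≃ₗᵢ[R] F) where
  toFun g := e.symm.trans (g.trans e)
  invFun h := e.trans (h.trans e.symm)
  left_inv g := by ext; simp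
  right_inv h := by ext; simp
  map_mul' g h := by ext; simp

@[simp]
theorem conjMulEquiv_apply_apply (e : E ≃ₗᵢ[R] F) (g : E ≃ₗᵢ[R] E) (x : E) :
    conjMulEquiv e g (e x) = e (g x) := by
  simp [conjMulEquiv]

end Conj

section Prod

variable (p : ENNReal) [Fact (1 ≤ p)] (R : Type*) {E₁ E₂ : Type*} [Semiring R]
  [SeminormedAddCommGroup E₁] [Module R E₁] [SeminormedAddCommGroup E₂] [Module R E₂]

def withLpProdCongrHom :
    (E₁ ≃ₗᵢ[R] E₁) × (E₂ ≃ₗᵢ[R] E₂) →* (WithLp p (E₁ × E₂) ≃ₗᵢ[R] WithLp p (E₁ × E₂)) where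
  toFun g := withLpProdCongr p g.1 g.2
  map_one' := by ext; rfl
  map_mul' g h := by ext; simp

theorem withLpProdCongrHom_injective :
    Function.Injective (withLpProdCongrHom p R (E₁ := E₁) (E₂ := E₂)) := by
  intro g h hgh
  have key (x : E₁) (y : E₂) : (g.1 x, g.2 y) = (h.1 x, h.2 y) := by
    simpa [withLpProdCongrHom] using congr($hgh (WithLp.toLp p (x, y)))
  exact Prod.ext (ext fun x ↦ congr_arg Prod.fst (key x 0))
    (ext fun y ↦ congr_arg Prod.snd (key 0 y))

end Prod

end LinearIsometryEquiv

namespace EuclideanSpace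

noncomputable def prodFinAddEquiv (m n : ℕ) :
    WithLp 2 (EuclideanSpace ℝ (Fin m) × EuclideanSpace ℝ (Fin n)) ≃ₗᵢ[ℝ]
      EuclideanSpace ℝ (Fin (m + n)) :=
  (PiLp.sumPiLpEquivProdLpPiLp 2 fun _ ↦ ℝ).symm.trans
    (LinearIsometryEquiv.piLpCongrLeft 2 ℝ ℝ finSumFinEquiv)

section WeightedDirectSum

variable {m n : ℕ} (a b : ℝ)

noncomputable def weightedDirectSum (x : EuclideanSpace ℝ (Fin m))
    (y : EuclideanSpace ℝ (Fin n)) : EuclideanSpace ℝ (Fin (m + n)) :=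
  prodFinAddEquiv m n (WithLp.toLp 2 (a • x, b • y))

theorem weightedDirectSum_sub (x x' : EuclideanSpace ℝ (Fin m))
    (y y' : EuclideanSpace ℝ (Fin n)) :
    weightedDirectSum a b x y - weightedDirectSum a b x' y' =
      weightedDirectSum a b (x - x') (y - y') := by
  simp only [weightedDirectSum, ← map_sub, smul_sub]
  rfl

theorem norm_weightedDirectSum_sq (x : EuclideanSpace ℝ (Fin m))
    (y : EuclideanSpace ℝ (Fin n)) :
    ‖weightedDirectSum a b x y‖ ^ 2 = a ^ 2 * ‖x‖ ^ 2 + b ^ 2 * ‖y‖ ^ 2 := by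
  simp [weightedDirectSum, WithLp.prod_norm_sq_eq_of_L2, norm_smul, mul_pow]

theorem norm_weightedDirectSum_eq_one {a b : ℝ} (hab : a ^ 2 + b ^ 2 = 1)
    {x : EuclideanSpace ℝ (Fin m)} {y : EuclideanSpace ℝ (Fin n)} (hx : ‖x‖ = 1)
    (hy : ‖y‖ = 1) : ‖weightedDirectSum a b x y‖ = 1 := by
  rw [← pow_eq_one_iff_of_nonneg (norm_nonneg _) two_ne_zero, norm_weightedDirectSum_sq,
    hx, hy]
  simpa using hab

end WeightedDirectSum

end EuclideanSpace

open Set EuclideanSpace LinearIsometryEquiv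

namespace SphericalSubPToral

variable {p k₁ k₂ : ℕ}

theorem mono {X Y : Set (EuclideanSpace ℝ (Fin k₁))} (hY : SphericalSubPToral p Y)
    (hXY : X ⊆ Y) : SphericalSubPToral p X := by
  obtain ⟨n, hk, ι, G, α, hG, v, hv, hYv⟩ := hY
  exact ⟨n, hk, ι, G, α, hG, v, hv, fun x hx ↦ hYv x (hXY hx)⟩

theorem image2_weightedDirectSum {X₁ : Set (EuclideanSpace ℝ (Fin k₁))}
    {X₂ : Set (EuclideanSpace ℝ (Fin k₂))} (h₁ : SphericalSubPToral p X₁)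
    (h₂ : SphericalSubPToral p X₂) {a b : ℝ} (hab : a ^ 2 + b ^ 2 = 1) :
    SphericalSubPToral p (image2 (weightedDirectSum a b) X₁ X₂) := by
  obtain ⟨n₁, hk₁, ι₁, G₁, α₁, ⟨e₁⟩, v₁, hv₁, hX₁⟩ := h₁
  obtain ⟨n₂, hk₂, ι₂, G₂, α₂, ⟨e₂⟩, v₂, hv₂, hX₂⟩ := h₂
  let ι := (prodFinAddEquiv n₁ n₂).toLinearIsometry.comp
    ((ι₁.withLpProdMap 2 ι₂).comp (prodFinAddEquiv k₁ k₂).symm.toLinearIsometry)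
  have hι (x y) : ι (weightedDirectSum a b x y) = weightedDirectSum a b (ι₁ x) (ι₂ y) := by
    simp [ι, weightedDirectSum]
  let Φ := (conjMulEquiv (prodFinAddEquiv n₁ n₂)).toMonoidHom.comp (withLpProdCongrHom 2 ℝ)
  have hΦ : Function.Injective Φ :=
    (conjMulEquiv _).injective.comp (withLpProdCongrHom_injective 2 ℝ)
  have hΦv (g : _ × _) (x y) :
      Φ g (weightedDirectSum a b x y) = weightedDirectSum a b (g.1 x) (g.2 y) := by
    simp [Φ, weightedDirectSum, withLpProdCongrHom]
  refine ⟨n₁ + n₂, add_le_add hk₁ hk₂, ι, (G₁.prod G₂).map Φ, α₁ + α₂,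
    ⟨(Subgroup.equivMapOfInjective _ Φ hΦ).symm.trans <| (G₁.prodEquiv G₂).trans <|
      (e₁.prodCongr e₂).trans (Multiplicative.finAppendMulEquiv (ZMod p) α₁ α₂)⟩,
    weightedDirectSum a b v₁ v₂, norm_weightedDirectSum_eq_one hab hv₁ hv₂, ?_⟩
  rintro _ ⟨x₁, hx₁, x₂, hx₂, rfl⟩
  obtain ⟨g₁, hg₁, hgv₁⟩ := hX₁ x₁ hx₁
  obtain ⟨g₂, hg₂, hgv₂⟩ := hX₂ x₂ hx₂
  exact ⟨Φ (g₁, g₂), Subgroup.mem_map_of_mem _ ⟨hg₁, hg₂⟩, by rw [hΦv, hι, hgv₁, hgv₂]⟩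

end SphericalSubPToral

theorem sphericalSubPToral_convex_general (p : ℕ) (lam : ℝ)
    (hlam₀ : 0 ≤ lam) (hlam₁ : lam ≤ 1) {k₁ k₂ : ℕ}
    (A₁ B₁ C₁ : EuclideanSpace ℝ (Fin k₁)) (A₂ B₂ C₂ : EuclideanSpace ℝ (Fin k₂))
    (hA₁ : ‖A₁‖ = 1) (hB₁ : ‖B₁‖ = 1) (hC₁ : ‖C₁‖ = 1)
    (hA₂ : ‖A₂‖ = 1) (hB₂ : ‖B₂‖ = 1) (hC₂ : ‖C₂‖ = 1)
    (h₁ : SphericalSubPToral p ({A₁, B₁, C₁} : Set (EuclideanSpace ℝ (Fin k₁))))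
    (h₂ : SphericalSubPToral p ({A₂, B₂, C₂} : Set (EuclideanSpace ℝ (Fin k₂)))) :
    ∃ m : ℕ, ∃ A B C : EuclideanSpace ℝ (Fin m),
      ‖A‖ = 1 ∧ ‖B‖ = 1 ∧ ‖C‖ = 1 ∧
      SphericalSubPToral p ({A, B, C} : Set (EuclideanSpace ℝ (Fin m))) ∧
      ‖A - B‖ ^ 2 = lam * ‖A₁ - B₁‖ ^ 2 + (1 - lam) * ‖A₂ - B₂‖ ^ 2 ∧
      ‖A - C‖ ^ 2 = lam * ‖A₁ - C₁‖ ^ 2 + (1 - lam) * ‖A₂ - C₂‖ ^ 2 ∧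
      ‖B - C‖ ^ 2 = lam * ‖B₁ - C₁‖ ^ 2 + (1 - lam) * ‖B₂ - C₂‖ ^ 2 := by
  have ha : √lam ^ 2 = lam := Real.sq_sqrt hlam₀
  have hb : √(1 - lam) ^ 2 = 1 - lam := Real.sq_sqrt (sub_nonneg.2 hlam₁)
  have hab : √lam ^ 2 + √(1 - lam) ^ 2 = 1 := by rw [ha, hb]; ring
  let J := weightedDirectSum (m := k₁) (n := k₂) √lam √(1 - lam)
  have hJ (x x' y y') :
      ‖J x y - J x' y'‖ ^ 2 = lam * ‖x - x'‖ ^ 2 + (1 - lam) * ‖y - y'‖ ^ 2 := by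
    rw [weightedDirectSum_sub, norm_weightedDirectSum_sq, ha, hb]
  refine ⟨k₁ + k₂, J A₁ A₂, J B₁ B₂, J C₁ C₂, norm_weightedDirectSum_eq_one hab hA₁ hA₂,
    norm_weightedDirectSum_eq_one hab hB₁ hB₂, norm_weightedDirectSum_eq_one hab hC₁ hC₂,
    (h₁.image2_weightedDirectSum h₂ hab).mono ?_, hJ .., hJ .., hJ ..⟩
  rintro _ (rfl | rfl | rfl) <;> exact mem_image2_of_mem (by simp) (by simp)

/-- **Convexity of squared side lengths of spherical sub-p-toral triangles.** Given two
spherical sub-p-toral triples `{A₁, B₁, C₁} ⊆ S^{k₁-1}` and `{A₂, B₂, C₂} ⊆ S^{k₂-1}`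
and `λ ∈ [0, 1]`, there is a spherical sub-p-toral triple `{A, B, C}` on some sphere
whose squared side lengths are the `λ`-convex combinations of the given ones. -/
theorem sphericalSubPToral_convex (p : ℕ) (hp : p.Prime) (lam : ℝ)
    (hlam₀ : 0 ≤ lam) (hlam₁ : lam ≤ 1) {k₁ k₂ : ℕ}
    (A₁ B₁ C₁ : EuclideanSpace ℝ (Fin k₁)) (A₂ B₂ C₂ : EuclideanSpace ℝ (Fin k₂))
    (hA₁ : ‖A₁‖ = 1) (hB₁ : ‖B₁‖ = 1) (hC₁ : ‖C₁‖ = 1)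
    (hA₂ : ‖A₂‖ = 1) (hB₂ : ‖B₂‖ = 1) (hC₂ : ‖C₂‖ = 1)
    (h₁ : SphericalSubPToral p ({A₁, B₁, C₁} : Set (EuclideanSpace ℝ (Fin k₁))))
    (h₂ : SphericalSubPToral p ({A₂, B₂, C₂} : Set (EuclideanSpace ℝ (Fin k₂)))) :
    ∃ m : ℕ, ∃ A B C : EuclideanSpace ℝ (Fin m),
      ‖A‖ = 1 ∧ ‖B‖ = 1 ∧ ‖C‖ = 1 ∧
      SphericalSubPToral p ({A, B, C} : Set (EuclideanSpace ℝ (Fin m))) ∧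
      ‖A - B‖ ^ 2 = lam * ‖A₁ - B₁‖ ^ 2 + (1 - lam) * ‖A₂ - B₂‖ ^ 2 ∧
      ‖A - C‖ ^ 2 = lam * ‖A₁ - C₁‖ ^ 2 + (1 - lam) * ‖A₂ - C₂‖ ^ 2 ∧
      ‖B - C‖ ^ 2 = lam * ‖B₁ - C₁‖ ^ 2 + (1 - lam) * ‖B₂ - C₂‖ ^ 2 :=
  sphericalSubPToral_convex_general p lam hlam₀ hlam₁ A₁ B₁ C₁ A₂ B₂ C₂ hA₁ hB₁ hC₁ hA₂ hB₂ hC₂ h₁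
    h₂
end

section
/- Let A, B, C be three points on the unit circle {v ∈ R^2 : ‖v‖ = 1}, and set X = ‖A − B‖^2, Y = ‖A − C‖^2, Z = ‖B − C‖^2. Then XYZ + X^2 + Y^2 + Z^2 = 2XY + 2YZ + 2ZX. -/
lemma norm_sq_coord (v : EuclideanSpace ℝ (Fin 2)) :
    ‖v‖ ^ 2 = (v 0) ^ 2 + (v 1) ^ 2 := by
  rw [EuclideanSpace.norm_eq, Real.sq_sqrt (by positivity)]
  simp [Fin.sum_univ_two, sq_abs]

/-- **The circumradius-one relation.** For any three points `A, B, C` on the unit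
circle in `ℝ²`, the squared side lengths `X = ‖A-B‖²`, `Y = ‖A-C‖²`, `Z = ‖B-C‖²`
satisfy `XYZ + X² + Y² + Z² = 2XY + 2YZ + 2ZX`. -/
theorem circle_squared_sidelength_relation (A B C : EuclideanSpace ℝ (Fin 2))
    (hA : ‖A‖ = 1) (hB : ‖B‖ = 1) (hC : ‖C‖ = 1) :
    ‖A - B‖ ^ 2 * ‖A - C‖ ^ 2 * ‖B - C‖ ^ 2
        + (‖A - B‖ ^ 2) ^ 2 + (‖A - C‖ ^ 2) ^ 2 + (‖B - C‖ ^ 2) ^ 2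
      = 2 * ‖A - B‖ ^ 2 * ‖A - C‖ ^ 2 + 2 * ‖A - C‖ ^ 2 * ‖B - C‖ ^ 2
        + 2 * ‖B - C‖ ^ 2 * ‖A - B‖ ^ 2 := by
  set a0 := A 0; set a1 := A 1
  set b0 := B 0; set b1 := B 1
  set c0 := C 0; set c1 := C 1
  have hA' : a0 ^ 2 + a1 ^ 2 = 1 := by
    have := norm_sq_coord A; rw [hA] at this; linarith
  have hB' : b0 ^ 2 + b1 ^ 2 = 1 := by
    have := norm_sq_coord B; rw [hB] at this; linarith
  have hC' : c0 ^ 2 + c1 ^ 2 = 1 := by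
    have := norm_sq_coord C; rw [hC] at this; linarith
  have hX : ‖A - B‖ ^ 2 = 2 - 2 * (a0 * b0 + a1 * b1) := by
    rw [norm_sq_coord]
    simp only [PiLp.sub_apply]
    linear_combination hA' + hB'
  have hY : ‖A - C‖ ^ 2 = 2 - 2 * (a0 * c0 + a1 * c1) := by
    rw [norm_sq_coord]
    simp only [PiLp.sub_apply]
    linear_combination hA' + hC'
  have hZ : ‖B - C‖ ^ 2 = 2 - 2 * (b0 * c0 + b1 * c1) := by
    rw [norm_sq_coord]
    simp only [PiLp.sub_apply]
    linear_combination hB' + hC'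
  set x := a0 * b0 + a1 * b1
  set y := a0 * c0 + a1 * c1
  set z := b0 * c0 + b1 * c1
  have gdet : 1 + 2 * (x * y * z) - x ^ 2 - y ^ 2 - z ^ 2 = 0 := by
    linear_combination (z ^ 2 - (b0 ^ 2 + b1 ^ 2) * (c0 ^ 2 + c1 ^ 2)) * hA'
      + (y ^ 2 - (c0 ^ 2 + c1 ^ 2)) * hB' + (x ^ 2 - 1) * hC'
  rw [hX, hY, hZ]
  linear_combination (-4 : ℝ) * gdet
end

section
/- Let V = {(x, y, z) ∈ R^3 : xyz + x^2 + y^2 + z^2 = 2xy + 2yz + 2zx}. Then every affine line ℓ ⊆ R^3 that is wholly contained in V has at least one constant coordinate; moreover, if the first coordinate is constant on ℓ with value x_0, then either x_0 = 0 and every (x_0, y, z) ∈ ℓ satisfies y = z, or x_0 = 4 and every (x_0, y, z) ∈ ℓ satisfies y + z = 4 (and the analogous statements hold when the second or third coordinate is constant, by symmetry of the equation). -/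
theorem key_lemma (x₀ a b α β : ℝ) (hne : α ≠ 0 ∨ β ≠ 0)
    (H : ∀ t : ℝ, x₀ * (a + t * α) * (b + t * β)
        + x₀ ^ 2 + (a + t * α) ^ 2 + (b + t * β) ^ 2
      = 2 * x₀ * (a + t * α) + 2 * (a + t * α) * (b + t * β)
        + 2 * (b + t * β) * x₀) :
    (x₀ = 0 ∧ ∀ t : ℝ, a + t * α = b + t * β) ∨
    (x₀ = 4 ∧ ∀ t : ℝ, (a + t * α) + (b + t * β) = 4) := by
  have h0 := H 0
  have h1 := H 1
  have hm := H (-1)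
  have E2 : x₀ * (α + β) ^ 2 + (4 - x₀) * (α - β) ^ 2 = 0 := by
    linear_combination 2 * h1 + 2 * hm - 4 * h0
  have E1 : x₀ * (a + b - 4) * (α + β) + (4 - x₀) * (a - b) * (α - β) = 0 := by
    linear_combination h1 - hm
  have E0 : x₀ * (a + b - 4) ^ 2 + (4 - x₀) * (a - b) ^ 2 = 4 * x₀ * (4 - x₀) := by
    linear_combination 4 * h0
  by_cases hx : x₀ = 0
  · subst hx
    have hαβ : α = β := by nlinarith [sq_nonneg (α - β)]
    have hab : a = b := by nlinarith [sq_nonneg (a - b)]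
    exact Or.inl ⟨rfl, fun t => by rw [hαβ, hab]⟩
  · have hx4 : x₀ = 4 := by
      by_contra h4
      have h4' : 4 - x₀ ≠ 0 := fun h => h4 (by linarith)
      have hS : α + β ≠ 0 := by
        intro hS0
        have h : (4 - x₀) * (α - β) ^ 2 = 0 := by
          linear_combination E2 - (x₀ * (α + β)) * hS0
        have hD0 : α - β = 0 := by
          rcases mul_eq_zero.mp h with h | h
          · exact absurd h h4'
          · exact pow_eq_zero_iff (n := 2) (by norm_num) |>.mp h
        rcases hne with h' | h' <;> apply h' <;> linarith
      have hD : α - β ≠ 0 := by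
        intro hD0
        have h : x₀ * (α + β) ^ 2 = 0 := by
          linear_combination E2 - ((4 - x₀) * (α - β)) * hD0
        rcases mul_eq_zero.mp h with h | h
        · exact hx h
        · exact hS (pow_eq_zero_iff (n := 2) (by norm_num) |>.mp h)
      have hkey : x₀ * (α + β) * ((a + b - 4) * (α - β) - (a - b) * (α + β)) = 0 := by
        linear_combination (α - β) * E1 - (a - b) * E2
      have h' : (a + b - 4) * (α - β) - (a - b) * (α + β) = 0 := by
        rcases mul_eq_zero.mp hkey with h | h
        · rcases mul_eq_zero.mp h with h | h
          · exact absurd h hx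
          · exact absurd h hS
        · exact h
      have final : 4 * x₀ * (4 - x₀) * (α - β) ^ 2 = 0 := by
        linear_combination (a - b) ^ 2 * E2 - (α - β) ^ 2 * E0
          + (x₀ * ((a + b - 4) * (α - β) + (a - b) * (α + β))) * h'
      exact (mul_ne_zero (mul_ne_zero (mul_ne_zero four_ne_zero hx) h4')
        (pow_ne_zero 2 hD)) final
    subst hx4
    have hS : α + β = 0 := by nlinarith [sq_nonneg (α + β)]
    have hσ : a + b = 4 := by nlinarith [sq_nonneg (a + b - 4)]
    exact Or.inr ⟨rfl, fun t => by linear_combination hσ + t * hS⟩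

/-- **Lines on the variety `xyz + x² + y² + z² = 2xy + 2yz + 2zx`.** Every affine line
wholly contained in the variety `V` has a constant coordinate; moreover, if coordinate
`i` is constant on the line with value `x₀`, then either `x₀ = 0` and the other two
coordinates are equal at every point of the line, or `x₀ = 4` and the other two
coordinates sum to `4` at every point of the line. (The statement for the first
coordinate, and for the others by the symmetry of the equation, is expressed here
uniformly over `i : Fin 3`.) -/
theorem lines_on_circumradius_variety (u w : Fin 3 → ℝ) (hw : w ≠ 0)
    (hline : ∀ t : ℝ,
      (u + t • w) 0 * (u + t • w) 1 * (u + t • w) 2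
          + ((u + t • w) 0) ^ 2 + ((u + t • w) 1) ^ 2 + ((u + t • w) 2) ^ 2
        = 2 * (u + t • w) 0 * (u + t • w) 1 + 2 * (u + t • w) 1 * (u + t • w) 2
          + 2 * (u + t • w) 2 * (u + t • w) 0) :
    (∃ i : Fin 3, ∀ t s : ℝ, (u + t • w) i = (u + s • w) i) ∧
    ∀ i : Fin 3, ∀ x₀ : ℝ, (∀ t : ℝ, (u + t • w) i = x₀) →
      ((x₀ = 0 ∧ ∀ t : ℝ, (u + t • w) (i + 1) = (u + t • w) (i + 2)) ∨
       (x₀ = 4 ∧ ∀ t : ℝ, (u + t • w) (i + 1) + (u + t • w) (i + 2) = 4)) := by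
  simp only [Pi.add_apply, Pi.smul_apply, smul_eq_mul] at hline ⊢
  have hc3 : w 0 * w 1 * w 2 = 0 := by
    have ha := hline 0
    have hb := hline 1
    have hc := hline (-1)
    have hd := hline 2
    linear_combination (hd - 3 * hb + 3 * ha - hc) / 6
  constructor
  · rcases mul_eq_zero.mp hc3 with h | h
    · rcases mul_eq_zero.mp h with h | h
      · exact ⟨0, fun t s => by rw [h]; ring⟩
      · exact ⟨1, fun t s => by rw [h]; ring⟩
    · exact ⟨2, fun t s => by rw [h]; ring⟩
  · intro i x₀ hc
    have hu : u i = x₀ := by linear_combination hc 0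
    have hwi : w i = 0 := by linear_combination hc 1 - hc 0
    fin_cases i
    · have hu' : u 0 = x₀ := hu
      have hwi' : w 0 = 0 := hwi
      have hne : w 1 ≠ 0 ∨ w 2 ≠ 0 := by
        by_contra h
        push_neg at h
        exact hw (funext fun j => by fin_cases j <;> simp [hwi', h.1, h.2])
      exact key_lemma x₀ (u 1) (u 2) (w 1) (w 2) hne (fun t => by
        have h := hline t
        rw [hwi', hu'] at h
        linear_combination h)
    · have hu' : u 1 = x₀ := hu
      have hwi' : w 1 = 0 := hwi
      have hne : w 2 ≠ 0 ∨ w 0 ≠ 0 := by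
        by_contra h
        push_neg at h
        exact hw (funext fun j => by fin_cases j <;> simp [hwi', h.1, h.2])
      exact key_lemma x₀ (u 2) (u 0) (w 2) (w 0) hne (fun t => by
        have h := hline t
        rw [hwi', hu'] at h
        linear_combination h)
    · have hu' : u 2 = x₀ := hu
      have hwi' : w 2 = 0 := hwi
      have hne : w 0 ≠ 0 ∨ w 1 ≠ 0 := by
        by_contra h
        push_neg at h
        exact hw (funext fun j => by fin_cases j <;> simp [hwi', h.1, h.2])
      exact key_lemma x₀ (u 0) (u 1) (w 0) (w 1) hne (fun t => by
        have h := hline t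
        rw [hwi', hu'] at h
        linear_combination h)
end
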